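/- Let θ ↦ V_θ be an analytic family of isometries of the form V_θ = (U_θ ⊗ id_K)V U_θ*, where V = V_{θ₀} is primitive with stationary state ρ_ss, U_θ is an analytic family of unitaries on H with U_{θ₀} = id, and H = −i(dU_θ*/dθ)|_{θ₀} is selfadjoint. Then the quantum Fisher information F = 4 tr{ρ_ss E[GG* + 2Re(G(id ⊗ R∘E(G*)))]} vanishes, where G* = i(dV_θ/dθ)|_{θ₀}V*, E(X) = V*XV, and R is the inverse of (Id − T) on the traceless-in-ρ_ss subspace with T(X) = V*(X ⊗ id_K)V. -/

import Mathlib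

/-! Since `i V̇ = (H ⊗ 1)V − VH` and `V` is an isometry, `E(G*) = T(H) − H`, so the solution `S`
satisfies `T(S) = S − T(H) + H`. Substituting this, the Fisher integrand
`E[GG* + 2 Re(G(S ⊗ 1))]` collapses to `(T − Id)(H² + HS + S*H)`, whose expectation in the
stationary state vanishes because `tr[ρ T(X)] = tr[T_*(ρ) X] = tr[ρ X]`. -/

open Matrix Filter
open scoped Kronecker ComplexOrder

noncomputable section

/-- The action of `Φ ⊗ id_n` on block matrices, used to define complete positivity. -/
def tensorId {a b : Type*} (Φ : Matrix a a ℂ → Matrix b b ℂ) (n : ℕ)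
    (X : Matrix (a × Fin n) (a × Fin n) ℂ) : Matrix (b × Fin n) (b × Fin n) ℂ :=
  fun p q => Φ (fun i j => X (i, p.2) (j, q.2)) p.1 q.1

/-- A map between matrix algebras is completely positive if `Φ ⊗ id_n` preserves
positive semidefiniteness for every `n`. -/
def IsCompletelyPositive {a b : Type*} [Fintype a] [Fintype b]
    (Φ : Matrix a a ℂ → Matrix b b ℂ) : Prop :=
  ∀ (n : ℕ) (X : Matrix (a × Fin n) (a × Fin n) ℂ), X.PosSemidef → (tensorId Φ n X).PosSemidef

/-- The map `X ↦ V₁* (X ⊗ 1_K) V₂` on `B(H₂, H₁)`, as a linear endomorphism.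
For `V₁ = V₂ = V` this is the Heisenberg channel associated with the isometry `V`. -/
def sandwich {α β : Type*} [Fintype α] [Fintype β] {k : ℕ}
    (V₁ : Matrix (α × Fin k) α ℂ) (V₂ : Matrix (β × Fin k) β ℂ) :
    Module.End ℂ (Matrix α β ℂ) where
  toFun X := V₁ᴴ * (X ⊗ₖ (1 : Matrix (Fin k) (Fin k) ℂ)) * V₂
  map_add' X Y := by simp [Matrix.add_kronecker, Matrix.add_mul, Matrix.mul_add]
  map_smul' c X := by simp [Matrix.smul_kronecker, Matrix.smul_mul, Matrix.mul_smul]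

/-- The Kraus operators `K_i` of an isometry `V : H → H ⊗ K`,
defined by `K_i φ = (id ⊗ ⟨i|) V φ`. -/
def kraus {D k : ℕ} (V : Matrix (Fin D × Fin k) (Fin D) ℂ) (i : Fin k) :
    Matrix (Fin D) (Fin D) ℂ :=
  fun a b => V (a, i) b

/-- The `n`-step Kraus operator `K_{ι(n-1)} ⋯ K_{ι(0)}` associated with a word `ι`. -/
def krausString {D k : ℕ} (V : Matrix (Fin D × Fin k) (Fin D) ℂ) :
    (n : ℕ) → (Fin n → Fin k) → Matrix (Fin D) (Fin D) ℂ
  | 0, _ => 1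
  | n + 1, ι => kraus V (ι (Fin.last n)) * krausString V n (fun m => ι m.castSucc)

/-- The output state `tr_H [V(n) ρ V(n)*]` after `n` steps, a density matrix on `K^⊗n`. -/
def outputState {D k : ℕ} (V : Matrix (Fin D × Fin k) (Fin D) ℂ)
    (ρ : Matrix (Fin D) (Fin D) ℂ) (n : ℕ) :
    Matrix (Fin n → Fin k) (Fin n → Fin k) ℂ :=
  fun ι ι' => Matrix.trace (krausString V n ι * ρ * (krausString V n ι')ᴴ)

/-- The Schrödinger (predual) transition map `ρ ↦ Σ_i K_i ρ K_i*`. -/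
def schrodinger {D k : ℕ} (V : Matrix (Fin D × Fin k) (Fin D) ℂ)
    (ρ : Matrix (Fin D) (Fin D) ℂ) : Matrix (Fin D) (Fin D) ℂ :=
  ∑ i, kraus V i * ρ * (kraus V i)ᴴ

/-- A linear endomorphism of a matrix algebra is primitive if some power of it maps every
nonzero positive semidefinite matrix to a positive definite one. -/
def PrimitiveMap {α : Type*} [Fintype α] [DecidableEq α]
    (T : Module.End ℂ (Matrix α α ℂ)) : Prop :=
  ∃ n : ℕ, ∀ X : Matrix α α ℂ, X.PosSemidef → X ≠ 0 → ((T ^ n) X).PosDef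

/-- An isometry `V : H → H ⊗ K` is primitive if its channel `X ↦ V*(X ⊗ 1)V` is primitive. -/
def PrimitiveIso {D k : ℕ} (V : Matrix (Fin D × Fin k) (Fin D) ℂ) : Prop :=
  PrimitiveMap (sandwich V V)

/-- The pure state `|x⟩⟨x|` associated with a vector `x`. -/
def outer {α : Type*} (x : α → ℂ) : Matrix α α ℂ := Matrix.vecMulVec x (star x)

/-- The trace norm of a matrix: the trace of `√(A* A)`. -/
def traceNorm {α : Type*} [Fintype α] [DecidableEq α] (A : Matrix α α ℂ) : ℝ :=
  ((Matrix.posSemidef_conjTranspose_mul_self A).1.eigenvectorUnitary.1 *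
    Matrix.diagonal (fun i => ((Real.sqrt
      ((Matrix.posSemidef_conjTranspose_mul_self A).1.eigenvalues i) : ℝ) : ℂ)) *
    (star (Matrix.posSemidef_conjTranspose_mul_self A).1.eigenvectorUnitary :
      Matrix α α ℂ)).trace.re

/-- A quantum channel: a completely positive trace preserving linear map. -/
def IsCPTP {α β : Type*} [Fintype α] [Fintype β]
    (Φ : Matrix α α ℂ →ₗ[ℂ] Matrix β β ℂ) : Prop :=
  IsCompletelyPositive (Φ : Matrix α α ℂ → Matrix β β ℂ) ∧
    ∀ X : Matrix α α ℂ, (Φ X).trace = X.trace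

section Sandwich

variable {α β : Type*} [Fintype α] [Fintype β] {k : ℕ}

theorem sandwich_apply (V₁ : Matrix (α × Fin k) α ℂ) (V₂ : Matrix (β × Fin k) β ℂ)
    (X : Matrix α β ℂ) : sandwich V₁ V₂ X = V₁ᴴ * (X ⊗ₖ (1 : Matrix (Fin k) (Fin k) ℂ)) * V₂ :=
  rfl

theorem conjTranspose_sandwich (V₁ : Matrix (α × Fin k) α ℂ) (V₂ : Matrix (β × Fin k) β ℂ)
    (X : Matrix α β ℂ) : (sandwich V₁ V₂ X)ᴴ = sandwich V₂ V₁ Xᴴ := by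
  simp only [sandwich_apply, conjTranspose_mul, conjTranspose_conjTranspose,
    conjTranspose_kronecker, conjTranspose_one, Matrix.mul_assoc]

end Sandwich

theorem trace_mul_sandwich {D k : ℕ} (V : Matrix (Fin D × Fin k) (Fin D) ℂ)
    (ρ X : Matrix (Fin D) (Fin D) ℂ) :
    (ρ * sandwich V V X).trace = (schrodinger V ρ * X).trace := by
  have cycle : (ρ * sandwich V V X).trace =
      (V * ρ * Vᴴ * (X ⊗ₖ (1 : Matrix (Fin k) (Fin k) ℂ))).trace := by
    rw [sandwich_apply, trace_mul_cycle', ← Matrix.mul_assoc V ρ, ← Matrix.mul_assoc (V * ρ)]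
  rw [cycle]
  simp only [Matrix.trace, Matrix.diag, Matrix.mul_apply, schrodinger, kraus,
    Matrix.sum_apply, conjTranspose_apply, kroneckerMap_apply, one_apply,
    Fintype.sum_prod_type, Finset.sum_mul, mul_ite, mul_one, mul_zero, Finset.sum_ite_eq',
    Finset.mem_univ, if_true]
  exact Finset.sum_congr rfl fun _ _ => Finset.sum_comm

theorem trace_mul_sandwich_sub_eq_zero {D k : ℕ} {V : Matrix (Fin D × Fin k) (Fin D) ℂ}
    {ρ : Matrix (Fin D) (Fin D) ℂ} (hρ : schrodinger V ρ = ρ) (Y : Matrix (Fin D) (Fin D) ℂ) :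
    (ρ * (sandwich V V Y - Y)).trace = 0 := by
  rw [Matrix.mul_sub, trace_sub, trace_mul_sandwich, hρ, sub_self]

section Isometry

variable {α : Type*} [Fintype α] [DecidableEq α] {k : ℕ} {V : Matrix (α × Fin k) α ℂ}
  {H : Matrix α α ℂ}

theorem isometry_condExp_generator (hV : Vᴴ * V = 1) :
    Vᴴ * (((H ⊗ₖ (1 : Matrix (Fin k) (Fin k) ℂ)) * V - V * H) * Vᴴ) * V =
      sandwich V V H - H := by
  rw [sandwich_apply, Matrix.mul_assoc, Matrix.mul_assoc _ Vᴴ V, hV, Matrix.mul_one,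
    Matrix.mul_sub, ← Matrix.mul_assoc Vᴴ V, hV, Matrix.one_mul, Matrix.mul_assoc]

theorem isometry_condExp_generator_adjoint_mul (hV : Vᴴ * V = 1) (hH : Hᴴ = H)
    (X : Matrix (α × Fin k) (α × Fin k) ℂ) :
    Vᴴ * ((((H ⊗ₖ (1 : Matrix (Fin k) (Fin k) ℂ)) * V - V * H) * Vᴴ)ᴴ * X) * V =
      Vᴴ * (H ⊗ₖ (1 : Matrix (Fin k) (Fin k) ℂ)) * X * V - H * (Vᴴ * X * V) := by
  have adjoint : (((H ⊗ₖ (1 : Matrix (Fin k) (Fin k) ℂ)) * V - V * H) * Vᴴ)ᴴ =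
      V * (Vᴴ * (H ⊗ₖ (1 : Matrix (Fin k) (Fin k) ℂ)) - H * Vᴴ) := by
    simp only [conjTranspose_mul, conjTranspose_sub, conjTranspose_conjTranspose,
      conjTranspose_kronecker, conjTranspose_one, hH, Matrix.sub_mul, Matrix.mul_sub,
      Matrix.mul_assoc]
  rw [adjoint, ← Matrix.mul_assoc Vᴴ, ← Matrix.mul_assoc Vᴴ, hV, Matrix.one_mul]
  simp only [Matrix.sub_mul, Matrix.mul_assoc]

theorem isometry_fisher_integrand_eq (hV : Vᴴ * V = 1) (hH : Hᴴ = H)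
    {G : Matrix (α × Fin k) (α × Fin k) ℂ}
    (hG : G = ((H ⊗ₖ (1 : Matrix (Fin k) (Fin k) ℂ)) * V - V * H) * Vᴴ) {S : Matrix α α ℂ}
    (hS : S - sandwich V V S = sandwich V V H - H) :
    Vᴴ * (Gᴴ * G) * V + Vᴴ * (Gᴴ * (S ⊗ₖ (1 : Matrix (Fin k) (Fin k) ℂ))) * V +
        (Vᴴ * (Gᴴ * (S ⊗ₖ (1 : Matrix (Fin k) (Fin k) ℂ))) * V)ᴴ =
      sandwich V V (H * H + H * S + Sᴴ * H) - (H * H + H * S + Sᴴ * H) := by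
  subst hG
  have sandwich_mul (X Y : Matrix α α ℂ) :
      Vᴴ * (X ⊗ₖ (1 : Matrix (Fin k) (Fin k) ℂ)) * (Y ⊗ₖ (1 : Matrix (Fin k) (Fin k) ℂ)) * V =
        sandwich V V (X * Y) := by
    rw [sandwich_apply, Matrix.mul_assoc Vᴴ, ← mul_kronecker_mul, Matrix.one_mul]
  have hTS : sandwich V V S = S - sandwich V V H + H := by
    rw [sub_add, ← hS, sub_sub_cancel]
  have hTSH : sandwich V V Sᴴ = Sᴴ - sandwich V V H + H := by
    rw [← conjTranspose_sandwich, hTS, conjTranspose_add, conjTranspose_sub,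
      conjTranspose_sandwich, hH]
  have hGG : Vᴴ * (H ⊗ₖ (1 : Matrix (Fin k) (Fin k) ℂ)) *
      (((H ⊗ₖ (1 : Matrix (Fin k) (Fin k) ℂ)) * V - V * H) * Vᴴ) * V =
        sandwich V V (H * H) - sandwich V V H * H := by
    rw [Matrix.mul_assoc _ _ V, Matrix.mul_assoc _ Vᴴ V, hV, Matrix.mul_one,
      Matrix.mul_sub, ← Matrix.mul_assoc, ← Matrix.mul_assoc, sandwich_mul, ← sandwich_apply]
  rw [isometry_condExp_generator_adjoint_mul hV hH,
    isometry_condExp_generator_adjoint_mul hV hH, hGG,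
    sandwich_mul, isometry_condExp_generator hV, ← sandwich_apply, conjTranspose_sub,
    conjTranspose_sandwich, conjTranspose_mul, conjTranspose_mul, conjTranspose_sandwich, hH,
    hTS, hTSH, map_add, map_add]
  noncomm_ring

end Isometry

theorem unidentifiable_parameter_zero_fisher_information_general (D k : ℕ)
    (V : Matrix (Fin D × Fin k) (Fin D) ℂ) (hV : Vᴴ * V = 1)
    (ρ : Matrix (Fin D) (Fin D) ℂ)
    (hρstat : schrodinger V ρ = ρ)
    (Hm : Matrix (Fin D) (Fin D) ℂ) (hHm : Hmᴴ = Hm)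
    (Vdot : Matrix (Fin D × Fin k) (Fin D) ℂ)
    (hdV : Complex.I • Vdot = (Hm ⊗ₖ (1 : Matrix (Fin k) (Fin k) ℂ)) * V - V * Hm) :
    ∀ S : Matrix (Fin D) (Fin D) ℂ, (ρ * S).trace = 0 →
      S - sandwich V V S = Vᴴ * ((Complex.I • Vdot) * Vᴴ) * V →
      (4 : ℂ) * (ρ *
        (Vᴴ * (((Complex.I • Vdot) * Vᴴ)ᴴ * ((Complex.I • Vdot) * Vᴴ)) * V +
         Vᴴ * (((Complex.I • Vdot) * Vᴴ)ᴴ * (S ⊗ₖ (1 : Matrix (Fin k) (Fin k) ℂ))) * V +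
         (Vᴴ * (((Complex.I • Vdot) * Vᴴ)ᴴ * (S ⊗ₖ (1 : Matrix (Fin k) (Fin k) ℂ))) * V)ᴴ)
        ).trace = 0 := by
  intro S _ hS
  rw [hdV, isometry_condExp_generator hV] at hS
  rw [isometry_fisher_integrand_eq hV hHm (by rw [hdV]) hS,
    trace_mul_sandwich_sub_eq_zero hρstat, mul_zero]

/-- For a family `V_θ = (U_θ ⊗ 1) V U_θ*` obtained from a primitive isometry `V` by a unitary
conjugation with generator `H`, the derivative satisfies `i V̇ = (H ⊗ 1)V − VH`, and the
quantum Fisher information `F = 4 tr{ρ_ss E[GG* + 2Re(G (R∘E(G*) ⊗ 1))]}` vanishes, where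
`G* = i V̇ V*`, `E(X) = V* X V`, and `S = R∘E(G*)` is the unique solution of
`(Id − T)S = E(G*)` with `tr[ρ_ss S] = 0`. -/
theorem unidentifiable_parameter_zero_fisher_information (D k : ℕ)
    (V : Matrix (Fin D × Fin k) (Fin D) ℂ) (hV : Vᴴ * V = 1) (hP : PrimitiveIso V)
    (ρ : Matrix (Fin D) (Fin D) ℂ) (hρpos : ρ.PosDef) (hρtr : ρ.trace = 1)
    (hρstat : schrodinger V ρ = ρ)
    (Hm : Matrix (Fin D) (Fin D) ℂ) (hHm : Hmᴴ = Hm)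
    (Vdot : Matrix (Fin D × Fin k) (Fin D) ℂ)
    (hdV : Complex.I • Vdot = (Hm ⊗ₖ (1 : Matrix (Fin k) (Fin k) ℂ)) * V - V * Hm) :
    ∀ S : Matrix (Fin D) (Fin D) ℂ, (ρ * S).trace = 0 →
      S - sandwich V V S = Vᴴ * ((Complex.I • Vdot) * Vᴴ) * V →
      (4 : ℂ) * (ρ *
        (Vᴴ * (((Complex.I • Vdot) * Vᴴ)ᴴ * ((Complex.I • Vdot) * Vᴴ)) * V +
         Vᴴ * (((Complex.I • Vdot) * Vᴴ)ᴴ * (S ⊗ₖ (1 : Matrix (Fin k) (Fin k) ℂ))) * V +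
         (Vᴴ * (((Complex.I • Vdot) * Vᴴ)ᴴ * (S ⊗ₖ (1 : Matrix (Fin k) (Fin k) ℂ))) * V)ᴴ)
        ).trace = 0 :=
  unidentifiable_parameter_zero_fisher_information_general D k V hV ρ hρstat Hm hHm Vdot hdV
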